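/- Let n ≥ 1 and N ≥ 3 be integers. If U ∈ M_n(ℂ) is unitary (U*U = I_n) and every entry of U − I_n equals N times a Gaussian integer, then U = I_n. In particular, for integers p ≥ q ≥ 1 with n = p+q and N ≥ 3, the intersection Γ_G(N) ∩ K equals {I_n}, where K = SU(p,q) ∩ U(n). -/
import Mathlib


open Matrix

/-- The matrix `I_{p,q} = diag(I_p, −I_q)`. -/
def stmt5.Ipq (p q : ℕ) : Matrix (Fin p ⊕ Fin q) (Fin p ⊕ Fin q) ℂ :=
  Matrix.fromBlocks 1 0 0 (-1)

/-- Membership in `Γ_G(N) = SU(p,q) ∩ (I_n + M_n(N·ℤ[i]))`. -/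
def stmt5.inGamma (p q N : ℕ) (γ : Matrix (Fin p ⊕ Fin q) (Fin p ⊕ Fin q) ℂ) : Prop :=
  γ.det = 1 ∧ γᴴ * stmt5.Ipq p q * γ = stmt5.Ipq p q ∧
    ∀ i j, ∃ a b : ℤ, γ i j - (1 : Matrix (Fin p ⊕ Fin q) (Fin p ⊕ Fin q) ℂ) i j =
      (N : ℂ) * ((a : ℂ) + (b : ℂ) * Complex.I)

lemma aux_term (N : ℕ) (d : ℂ) (hd : d = 0 ∨ d = 1) (a b : ℤ) :
    star (d + (N:ℂ) * ((a:ℂ) + (b:ℂ) * Complex.I)) * (d + (N:ℂ) * ((a:ℂ) + (b:ℂ) * Complex.I))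
      = d + 2*(N:ℂ)*(a:ℂ)*d + (N:ℂ)^2 * ((a:ℂ)^2 + (b:ℂ)^2) := by
  have h1 : star (d + (N:ℂ) * ((a:ℂ) + (b:ℂ) * Complex.I))
      = d + (N:ℂ) * ((a:ℂ) - (b:ℂ) * Complex.I) := by
    rcases hd with h | h <;> subst h <;>
    · simp only [star_add, star_mul', star_zero, star_one, Complex.star_def,
        map_add, _root_.map_mul, Complex.conj_I, Complex.conj_natCast, map_intCast]
      ring
  rw [h1]
  have hI : Complex.I ^ 2 = -1 := Complex.I_sq
  have hd2 : d * d = d := by rcases hd with h | h <;> subst h <;> ring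
  linear_combination hd2 + (-(N:ℂ)^2*(b:ℂ)^2) * hI

lemma aux_main {m : Type*} [Fintype m] [DecidableEq m] (N : ℕ) (hN : 3 ≤ N)
    (U : Matrix m m ℂ) (hU : Uᴴ * U = 1)
    (hent : ∀ i j, ∃ a b : ℤ, U i j - (1 : Matrix m m ℂ) i j =
      (N : ℂ) * ((a : ℂ) + (b : ℂ) * Complex.I)) : U = 1 := by
  have hNz : (N : ℂ) ≠ 0 := Nat.cast_ne_zero.mpr (by omega)
  choose a b hab using hent
  have hab' : ∀ i j, U i j = (1 : Matrix m m ℂ) i j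
      + (N : ℂ) * ((a i j : ℂ) + (b i j : ℂ) * Complex.I) := by
    intro i j; linear_combination hab i j
  ext i j
  -- work in column j
  have hcol : ∑ k, star (U k j) * U k j = 1 := by
    have := congrFun (congrFun hU j) j
    simpa [Matrix.mul_apply, Matrix.conjTranspose_apply, Matrix.one_apply] using this
  have hterm : ∀ k, star (U k j) * U k j =
      (1 : Matrix m m ℂ) k j + 2*(N:ℂ)*(a k j : ℂ)*((1 : Matrix m m ℂ) k j)
        + (N:ℂ)^2 * ((a k j : ℂ)^2 + (b k j : ℂ)^2) := by
    intro k
    rw [hab' k j]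
    exact aux_term N _ (by by_cases h : k = j <;> simp [Matrix.one_apply, h]) _ _
  rw [Finset.sum_congr rfl (fun k _ => hterm k)] at hcol
  simp only [Finset.sum_add_distrib] at hcol
  have h1 : ∑ k, (1 : Matrix m m ℂ) k j = 1 := by simp [Matrix.one_apply]
  have h2 : ∑ k, 2*(N:ℂ)*(a k j : ℂ)*((1 : Matrix m m ℂ) k j) = 2*(N:ℂ)*(a j j : ℂ) := by
    simp only [Matrix.one_apply, mul_ite, mul_one, mul_zero]
    rw [Finset.sum_ite_eq' Finset.univ j (fun k => 2*(N:ℂ)*(a k j : ℂ))]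
    simp
  rw [h1, h2, ← Finset.mul_sum] at hcol
  -- hcol : 1 + 2*N*a j j + N^2 * ∑ (a^2+b^2) = 1
  set T : ℤ := ∑ k, (a k j ^ 2 + b k j ^ 2) with hTdef
  have hTC : ((T : ℤ) : ℂ) = ∑ k, ((a k j : ℂ)^2 + (b k j : ℂ)^2) := by
    push_cast [hTdef]; rfl
  have hCeq : (N : ℂ) * ((2 * a j j + N * T : ℤ) : ℂ) = 0 := by
    push_cast
    rw [hTC]
    ring_nf
    ring_nf at hcol
    linear_combination hcol
  have hZeq : 2 * a j j + N * T = 0 := by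
    rcases mul_eq_zero.mp hCeq with h | h
    · exact absurd h hNz
    · exact_mod_cast h
  have hTnn : ∀ k ∈ Finset.univ, (0:ℤ) ≤ a k j ^ 2 + b k j ^ 2 := fun k _ => by positivity
  have hTge : a j j ^ 2 + b j j ^ 2 ≤ T :=
    Finset.single_le_sum hTnn (Finset.mem_univ j)
  have hT0 : 0 ≤ T := Finset.sum_nonneg hTnn
  have hN' : (3 : ℤ) ≤ (N : ℤ) := by exact_mod_cast hN
  have haux : 0 ≤ a j j * (a j j + 1) := by
    rcases le_or_gt 0 (a j j) with h | h
    · positivity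
    · exact mul_nonneg_of_nonpos_of_nonpos (by omega) (by omega)
  have ha0 : a j j = 0 := by nlinarith [sq_nonneg (a j j), sq_nonneg (b j j)]
  have hTz : T = 0 := by nlinarith
  have hzero : ∀ k ∈ Finset.univ, a k j ^ 2 + b k j ^ 2 = 0 :=
    (Finset.sum_eq_zero_iff_of_nonneg hTnn).mp hTz
  have := hzero i (Finset.mem_univ i)
  have hai : a i j = 0 := by nlinarith [sq_nonneg (a i j), sq_nonneg (b i j)]
  have hbi : b i j = 0 := by nlinarith [sq_nonneg (a i j), sq_nonneg (b i j)]
  rw [hab' i j, hai, hbi]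
  simp

/-- For `N ≥ 3`: a unitary matrix `U` with `U − I_n ∈ M_n(N·ℤ[i])` equals `I_n`;
in particular `Γ_G(N) ∩ K = {I_n}` for `K = SU(p,q) ∩ U(n)`. -/
theorem stmt_5 (N : ℕ) (hN : 3 ≤ N) :
    (∀ n : ℕ, 1 ≤ n → ∀ U : Matrix (Fin n) (Fin n) ℂ,
      Uᴴ * U = 1 →
      (∀ i j, ∃ a b : ℤ, U i j - (1 : Matrix (Fin n) (Fin n) ℂ) i j =
        (N : ℂ) * ((a : ℂ) + (b : ℂ) * Complex.I)) →
      U = 1) ∧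
    (∀ p q : ℕ, 1 ≤ q → q ≤ p →
      {γ : Matrix (Fin p ⊕ Fin q) (Fin p ⊕ Fin q) ℂ |
        stmt5.inGamma p q N γ ∧ γ ∈ Matrix.unitaryGroup (Fin p ⊕ Fin q) ℂ} = {1}) := by
  constructor
  · intro n _ U hU hent
    exact aux_main N hN U hU hent
  · intro p q _ _
    ext γ
    simp only [Set.mem_setOf_eq, Set.mem_singleton_iff]
    constructor
    · rintro ⟨⟨_, _, hent⟩, hmem⟩
      have hU : γᴴ * γ = 1 := by
        have := hmem.1
        rwa [Matrix.star_eq_conjTranspose] at this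
      exact aux_main N hN γ hU hent
    · rintro rfl
      refine ⟨⟨Matrix.det_one, by simp, fun i j => ⟨0, 0, by simp⟩⟩, ?_⟩
      exact Submonoid.one_mem _
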